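/- arXiv:1812.09211 — 2 statements merged into one kernel-verified Lean document; each statement's English description precedes it below -/
import Mathlib

section
/- (Recurrence) Let K be a bounded self-adjoint operator on a complex Hilbert space H admitting a Hilbert basis (φ_n)_{n∈ℕ} of eigenvectors of K. Then for every t_- ≤ 0, every ε > 0, and every finite family ψ_1, …, ψ_M ∈ H, there exists t_+ > 0 such that ‖exp(it_+ K) ψ_j − exp(it_- K) ψ_j‖ < ε for all j = 1, …, M; that is, exp(it_+K) lies in the given strong neighborhood of exp(it_-K). -/
/-!
The eigenphases `(e^{iμₙ})ₙ` form a single element `g` of the compact group `∏ₙ 𝕋`, and the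
powers of an element of a compact group come back arbitrarily close to `1` at arbitrarily
late times. Along an ultrafilter of such times `k → ∞` we get `e^{ikμₙ} → 1` for every `n`,
i.e. `exp(ikK) → 1` strongly on the eigenbasis, hence on all of `H` since the unitaries
`exp(ikK)` are equicontinuous. Finally
`exp(i(t₋ + k)K) - exp(it₋K) = exp(it₋K) (exp(ikK) - 1)` and `exp(it₋K)` is an isometry.
-/

open scoped InnerProductSpace Topology
open Filter NormedSpace

theorem ContinuousLinearMap.pow_apply_of_apply_eq_smul {R M : Type*} [CommSemiring R]
    [AddCommMonoid M] [Module R M] [TopologicalSpace M] {A : M →L[R] M} {x : M} {c : R}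
    (h : A x = c • x) (n : ℕ) : (A ^ n) x = c ^ n • x := by
  induction n with
  | zero => simp
  | succ n ih => rw [pow_succ', mul_apply_eq_comp, ih, map_smul, h, smul_smul, pow_succ]

theorem ContinuousLinearMap.exp_apply_of_apply_eq_smul {𝕜 E : Type*} [RCLike 𝕜]
    [NormedAddCommGroup E] [NormedSpace 𝕜 E] [CompleteSpace E] {A : E →L[𝕜] E} {x : E} {c : 𝕜}
    (h : A x = c • x) : exp A x = exp c • x := by
  refine ((exp_series_hasSum_exp' (𝕂 := 𝕜) A).mapL (apply 𝕜 E x)).unique ?_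
  simpa [pow_apply_of_apply_eq_smul h, smul_smul] using
    (exp_series_hasSum_exp' (𝕂 := 𝕜) c).smul_const x

theorem ContinuousLinearMap.tendsto_apply_of_dense_span {ι R E F : Type*} [Semiring R]
    [TopologicalSpace E] [AddCommMonoid E] [Module R E] [UniformSpace F] [AddCommMonoid F]
    [Module R F] [ContinuousAdd F] [ContinuousConstSMul R F] {l : Filter ι}
    {T : ι → E →L[R] F} (hT : Equicontinuous fun i ↦ ⇑(T i)) (f : E →L[R] F) {s : Set E}
    (hs : Dense (Submodule.span R s : Set E)) (h : ∀ x ∈ s, Tendsto (fun i ↦ T i x) l (𝓝 (f x)))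
    (x : E) : Tendsto (fun i ↦ T i x) l (𝓝 (f x)) := by
  have h_span : (Submodule.span R s : Set E) ⊆ {x | Tendsto (fun i ↦ T i x) l (𝓝 (f x))} := by
    intro y hy
    induction hy using Submodule.span_induction with
    | mem y hy => exact h y hy
    | zero => simpa using tendsto_const_nhds
    | add y z _ _ hy hz => simpa using hy.add hz
    | smul c y _ hy => simpa using hy.const_smul c
  exact (hT.isClosed_setOfPred_tendsto f.continuous).closure_subset_iff.2 h_span (hs x)

section ComplexBanachAlgebra

variable {A : Type*} [NormedRing A] [NormedAlgebra ℂ A] [CompleteSpace A]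

theorem exp_I_smul_ofReal_add_smul (a : A) (s t : ℝ) :
    exp (Complex.I • (((s + t : ℝ) : ℂ) • a)) =
      exp (Complex.I • ((s : ℂ) • a)) * exp (Complex.I • ((t : ℂ) • a)) := by
  let +nondep : NormedAlgebra ℚ A := .restrictScalars ℚ ℂ A
  have h_comm : Commute (Complex.I • ((s : ℂ) • a)) (Complex.I • ((t : ℂ) • a)) :=
    (((Commute.refl a).smul_left _).smul_right _).smul_left _ |>.smul_right _
  rw [← exp_add_of_commute h_comm, Complex.ofReal_add, add_smul, smul_add]

theorem IsSelfAdjoint.exp_I_smul_ofReal_smul_mem_unitary [StarRing A] [ContinuousStar A]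
    [StarModule ℂ A] {a : A} (ha : IsSelfAdjoint a) (t : ℝ) :
    NormedSpace.exp (Complex.I • ((t : ℂ) • a)) ∈ unitary A :=
  let +nondep : NormedAlgebra ℚ A := .restrictScalars ℚ ℂ A
  exp_mem_unitary_of_mem_skewAdjoint <|
    ((show IsSelfAdjoint (t : ℂ) from Complex.conj_ofReal t).smul ha).smul_mem_skewAdjoint
      Complex.conj_I

end ComplexBanachAlgebra

section HilbertSpace

variable {H : Type*} [NormedAddCommGroup H] [InnerProductSpace ℂ H] [CompleteSpace H]

theorem exp_I_smul_ofReal_smul_apply_of_apply_eq_smul {K : H →L[ℂ] H} {x : H} {m : ℝ}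
    (h : K x = (m : ℂ) • x) (t : ℝ) :
    exp (Complex.I • ((t : ℂ) • K)) x = (Circle.exp (t * m) : ℂ) • x := by
  have h' : (Complex.I • ((t : ℂ) • K)) x = (Complex.I * t * m) • x := by
    rw [smul_apply, smul_apply, h, smul_smul, smul_smul, mul_assoc]
  rw [ContinuousLinearMap.exp_apply_of_apply_eq_smul h', ← Complex.exp_eq_exp_ℂ, Circle.coe_exp]
  push_cast
  ring_nf

theorem exists_ultrafilter_le_atTop_tendsto_exp_I_smul_apply {ι : Type*} {K : H →L[ℂ] H}
    (hK : IsSelfAdjoint K) (φ : HilbertBasis ι ℂ H) (μ : ι → ℝ)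
    (hμ : ∀ n, K (φ n) = (μ n : ℂ) • φ n) :
    ∃ l : Ultrafilter ℕ, (l : Filter ℕ) ≤ atTop ∧
      ∀ x, Tendsto (fun k : ℕ ↦ exp (Complex.I • (((k : ℝ) : ℂ) • K)) x) l (𝓝 x) := by
  obtain ⟨l, hl_atTop, hl⟩ := mapClusterPt_iff_ultrafilter.1
    (mapClusterPt_one_atTop_pow fun n ↦ Circle.exp (μ n))
  refine ⟨l, hl_atTop, ContinuousLinearMap.tendsto_apply_of_dense_span ?_
    (ContinuousLinearMap.id ℂ H) (Submodule.dense_iff_topologicalClosure_eq_top.2 φ.dense_span)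
    (Set.forall_mem_range.2 fun n ↦ ?_)⟩
  · refine (LipschitzWith.uniformEquicontinuous _ 1 fun k ↦ ?_).equicontinuous
    exact (AddMonoidHomClass.isometry_of_norm _ <| ContinuousLinearMap.norm_map_of_mem_unitary <|
      hK.exp_I_smul_ofReal_smul_mem_unitary k).lipschitz
  · have h_phase : Tendsto (fun k : ℕ ↦ ((Circle.exp (μ n) ^ k : Circle) : ℂ)) l (𝓝 1) :=
      (continuous_subtype_val.tendsto 1).comp (((continuous_apply n).tendsto 1).comp hl)
    simp only [exp_I_smul_ofReal_smul_apply_of_apply_eq_smul (hμ n), Circle.exp_natCast_mul,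
      ContinuousLinearMap.id_apply]
    simpa only [one_smul] using h_phase.smul_const (φ n)

end HilbertSpace

theorem recurrence_of_pure_point_spectrum_general
    {H : Type*} [NormedAddCommGroup H] [InnerProductSpace ℂ H] [CompleteSpace H]
    (φ : HilbertBasis ℕ ℂ H) (K : H →L[ℂ] H)
    (hKsa : ∀ ψ χ : H, ⟪K ψ, χ⟫_ℂ = ⟪ψ, K χ⟫_ℂ)
    (μ : ℕ → ℝ) (hμ : ∀ n, K (φ n) = (μ n : ℂ) • φ n)
    (tminus : ℝ)
    (ε : ℝ) (hε : 0 < ε) (M : ℕ) (ψ : Fin M → H) :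
    ∃ tplus : ℝ, 0 < tplus ∧ ∀ j : Fin M,
      ‖NormedSpace.exp (Complex.I • ((tplus : ℂ) • K)) (ψ j)
        - NormedSpace.exp (Complex.I • ((tminus : ℂ) • K)) (ψ j)‖ < ε := by
  have hK : IsSelfAdjoint K := LinearMap.IsSymmetric.isSelfAdjoint hKsa
  obtain ⟨l, hl_atTop, h_strong⟩ := exists_ultrafilter_le_atTop_tendsto_exp_I_smul_apply hK φ μ hμ
  have h_eventually : ∀ᶠ k : ℕ in l, -tminus < k ∧
      ∀ j, ‖exp (Complex.I • (((k : ℝ) : ℂ) • K)) (ψ j) - ψ j‖ < ε :=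
    ((tendsto_natCast_atTop_atTop.eventually_gt_atTop (-tminus)).filter_mono hl_atTop).and <|
      eventually_all.2 fun j ↦
        ((h_strong (ψ j)).sub_const (ψ j)).norm.eventually_lt_const (by simpa using hε)
  obtain ⟨k, hk, hkψ⟩ := h_eventually.exists
  refine ⟨tminus + k, by linarith, fun j ↦ ?_⟩
  rw [exp_I_smul_ofReal_add_smul, mul_apply_eq_comp, ← map_sub,
    ContinuousLinearMap.norm_map_of_mem_unitary (hK.exp_I_smul_ofReal_smul_mem_unitary tminus)]
  exact hkψ j

/-- Proposition 2 of the paper (recurrence): for a bounded self-adjoint operator `K`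
with a Hilbert basis of eigenvectors, the one-parameter group `t ↦ exp(itK)` revisits
approximately (in the strong topology) every point of its past at positive times. -/
theorem recurrence_of_pure_point_spectrum
    {H : Type*} [NormedAddCommGroup H] [InnerProductSpace ℂ H] [CompleteSpace H]
    (φ : HilbertBasis ℕ ℂ H) (K : H →L[ℂ] H)
    (hKsa : ∀ ψ χ : H, ⟪K ψ, χ⟫_ℂ = ⟪ψ, K χ⟫_ℂ)
    (μ : ℕ → ℝ) (hμ : ∀ n, K (φ n) = (μ n : ℂ) • φ n)
    (tminus : ℝ) (htminus : tminus ≤ 0)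
    (ε : ℝ) (hε : 0 < ε) (M : ℕ) (ψ : Fin M → H) :
    ∃ tplus : ℝ, 0 < tplus ∧ ∀ j : Fin M,
      ‖NormedSpace.exp (Complex.I • ((tplus : ℂ) • K)) (ψ j)
        - NormedSpace.exp (Complex.I • ((tminus : ℂ) • K)) (ψ j)‖ < ε :=
  recurrence_of_pure_point_spectrum_general φ K hKsa μ hμ tminus ε hε M ψ
end

section
/- (Trotter product formula for bounded operators) Let A and B be elements of a complex Banach algebra (for instance bounded operators on a complex Hilbert space). Then lim_{n→∞} (exp(A/n) · exp(B/n))^n = exp(A + B), with convergence in the norm of the algebra. -/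
/-!
With `t = 1/n`, the one-step defect `d t = exp (t • A) * exp (t • B) - exp (t • (A + B))` has
derivative `(A + B) - (A + B) = 0` at `t = 0`, so `d t = o(t)`. Telescoping
`Cⁿ - Dⁿ = ∑ Cᵏ (C - D) Dⁿ⁻¹⁻ᵏ` with `Dⁿ = exp (A + B)` and `‖C‖, ‖D‖ ≤ exp ((‖A‖ + ‖B‖) / n)` when
`‖1‖ = 1` gives `‖Cⁿ - exp (A + B)‖ ≤ exp (‖A‖ + ‖B‖) * n ‖d (1/n)‖ → 0`. The normalisation
`‖1‖ = 1` is reached by passing to the left regular representation `𝔸 → (𝔸 →L 𝔸)`, a unital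
algebra homomorphism that is a topological embedding.
-/

open Filter NormedSpace Asymptotics Topology
open scoped Nat

theorem norm_pow_sub_pow_le {R : Type*} [NormedRing R] [NormOneClass R] {a b : R} {M : ℝ}
    (ha : ‖a‖ ≤ M) (hb : ‖b‖ ≤ M) (n : ℕ) :
    ‖a ^ n - b ^ n‖ ≤ n * M ^ (n - 1) * ‖a - b‖ := by
  induction n with
  | zero => simp
  | succ n ih =>
    have hM : 0 ≤ M := (norm_nonneg a).trans ha
    have han : ‖a ^ n‖ ≤ M ^ n :=
      (norm_pow_le a n).trans (pow_le_pow_left₀ (norm_nonneg a) ha n)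
    have hsplit : a ^ (n + 1) - b ^ (n + 1) = a ^ n * (a - b) + (a ^ n - b ^ n) * b := by
      noncomm_ring
    have hpow : (n : ℝ) * M ^ (n - 1) * M = n * M ^ n := by
      cases n with
      | zero => simp
      | succ m => rw [Nat.add_sub_cancel, pow_succ]; ring
    calc ‖a ^ (n + 1) - b ^ (n + 1)‖
        ≤ ‖a ^ n‖ * ‖a - b‖ + ‖a ^ n - b ^ n‖ * ‖b‖ := by
          rw [hsplit]
          exact (norm_add_le _ _).trans (add_le_add (norm_mul_le _ _) (norm_mul_le _ _))
      _ ≤ M ^ n * ‖a - b‖ + n * M ^ (n - 1) * ‖a - b‖ * M := by gcongr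
      _ = (n + 1 : ℕ) * M ^ (n + 1 - 1) * ‖a - b‖ := by
          rw [mul_right_comm _ ‖a - b‖, hpow]; push_cast; ring

theorem norm_exp_le_exp_norm {𝔸 : Type*} [NormedRing 𝔸] [NormOneClass 𝔸] [NormedAlgebra ℚ 𝔸]
    [CompleteSpace 𝔸] (x : 𝔸) : ‖exp x‖ ≤ Real.exp ‖x‖ := by
  refine (exp_series_hasSum_exp' (𝕂 := ℚ) x).norm_le_of_bounded
    (Real.exp_eq_exp_ℝ ▸ expSeries_div_hasSum_exp ‖x‖) fun k => ?_
  rw [norm_smul, norm_inv, ← Rat.norm_cast_real, Rat.cast_natCast, Real.norm_natCast,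
    div_eq_inv_mul]
  gcongr
  exact norm_pow_le x k

section Trotter

variable {𝕂 𝔸 : Type*} [RCLike 𝕂] [NormedRing 𝔸] [NormedAlgebra 𝕂 𝔸] [CompleteSpace 𝔸]

theorem isLittleO_exp_smul_mul_exp_smul_sub_exp_smul_add (A B : 𝔸) :
    (fun t : 𝕂 => exp (t • A) * exp (t • B) - exp (t • (A + B))) =o[𝓝 0] fun t => t := by
  have hderiv :
      HasDerivAt (fun t : 𝕂 => exp (t • A) * exp (t • B) - exp (t • (A + B))) 0 0 := by
    refine (((hasDerivAt_exp_smul_const A (0 : 𝕂)).fun_mul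
      (hasDerivAt_exp_smul_const' B 0)).fun_sub (hasDerivAt_exp_smul_const (A + B) 0)).congr_deriv ?_
    simp
  simpa using hasDerivAt_iff_isLittleO_nhds_zero.mp hderiv

theorem exp_smul_pow (t : 𝕂) (x : 𝔸) (n : ℕ) : exp (t • x) ^ n = exp (((n : 𝕂) * t) • x) := by
  let +nondep : NormedAlgebra ℚ 𝔸 := .restrictScalars ℚ 𝕂 𝔸
  rw [← exp_nsmul, mul_smul, Nat.cast_smul_eq_nsmul]

theorem norm_exp_smul_mul_exp_smul_pow_sub_le [NormOneClass 𝔸] (A B : 𝔸) (t : 𝕂) (n : ℕ) :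
    ‖(exp (t • A) * exp (t • B)) ^ n - exp (((n : 𝕂) * t) • (A + B))‖ ≤
      Real.exp (n * ‖t‖ * (‖A‖ + ‖B‖)) *
        (n * ‖exp (t • A) * exp (t • B) - exp (t • (A + B))‖) := by
  let +nondep : NormedAlgebra ℚ 𝔸 := .restrictScalars ℚ 𝕂 𝔸
  set M := Real.exp (‖t‖ * (‖A‖ + ‖B‖))
  have hprod : ‖exp (t • A) * exp (t • B)‖ ≤ M := by
    calc ‖exp (t • A) * exp (t • B)‖ ≤ Real.exp ‖t • A‖ * Real.exp ‖t • B‖ :=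
          (norm_mul_le _ _).trans (mul_le_mul (norm_exp_le_exp_norm _) (norm_exp_le_exp_norm _)
            (norm_nonneg _) (Real.exp_pos _).le)
      _ = M := by rw [← Real.exp_add, norm_smul, norm_smul, ← mul_add]
  have hsum : ‖exp (t • (A + B))‖ ≤ M := by
    refine (norm_exp_le_exp_norm _).trans (Real.exp_le_exp.mpr ?_)
    rw [norm_smul]
    gcongr
    exact norm_add_le A B
  have hM : M ^ (n - 1) ≤ Real.exp (n * ‖t‖ * (‖A‖ + ‖B‖)) := by
    rw [mul_assoc, Real.exp_nat_mul]
    exact pow_le_pow_right₀ (Real.one_le_exp (by positivity)) (Nat.sub_le n 1)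
  rw [← exp_smul_pow]
  calc _ ≤ n * M ^ (n - 1) * ‖exp (t • A) * exp (t • B) - exp (t • (A + B))‖ :=
        norm_pow_sub_pow_le hprod hsum n
    _ = M ^ (n - 1) * (n * ‖exp (t • A) * exp (t • B) - exp (t • (A + B))‖) := by ring
    _ ≤ _ := by gcongr

theorem tendsto_exp_smul_mul_exp_smul_pow_of_normOneClass [NormOneClass 𝔸] (A B : 𝔸) :
    Tendsto (fun n : ℕ => (exp ((n : 𝕂)⁻¹ • A) * exp ((n : 𝕂)⁻¹ • B)) ^ n) atTop
      (𝓝 (exp (A + B))) := by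
  set d := fun t : 𝕂 => exp (t • A) * exp (t • B) - exp (t • (A + B))
  have hd : Tendsto (fun n : ℕ => ((n : 𝕂)⁻¹)⁻¹ • d (n : 𝕂)⁻¹) atTop (𝓝 0) :=
    ((isLittleO_exp_smul_mul_exp_smul_sub_exp_smul_add A B).comp_tendsto
      tendsto_inv_atTop_nhds_zero_nat).tendsto_inv_smul_nhds_zero
  rw [tendsto_iff_norm_sub_tendsto_zero]
  refine squeeze_zero' (.of_forall fun _ => norm_nonneg _) ?_
    (by simpa using hd.norm.const_mul (Real.exp (‖A‖ + ‖B‖)))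
  filter_upwards [eventually_ne_atTop 0] with n hn
  have hbound := norm_exp_smul_mul_exp_smul_pow_sub_le A B (n : 𝕂)⁻¹ n
  rw [mul_inv_cancel₀ (Nat.cast_ne_zero.mpr hn), one_smul, norm_inv, RCLike.norm_natCast,
    mul_inv_cancel₀ (Nat.cast_ne_zero.mpr hn), one_mul] at hbound
  simpa [d, norm_smul] using hbound

end Trotter

section LeftRegularRepresentation

variable (𝕂 𝔸 : Type*) [NontriviallyNormedField 𝕂] [NormedRing 𝔸] [NormedAlgebra 𝕂 𝔸]

noncomputable def AlgHom.Lmul : 𝔸 →ₐ[𝕂] 𝔸 →L[𝕂] 𝔸 where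
  __ := NonUnitalAlgHom.Lmul 𝕂 𝔸
  map_one' := by ext; simp
  commutes' r := by ext; simp [Algebra.smul_def]

theorem AlgHom.isInducing_Lmul : IsInducing (AlgHom.Lmul 𝕂 𝔸) := by
  refine (ContinuousLinearMap.antilipschitz_of_bound (ContinuousLinearMap.mul 𝕂 𝔸)
    (K := ‖(1 : 𝔸)‖₊) fun a => ?_).isUniformInducing
      (ContinuousLinearMap.mul 𝕂 𝔸).uniformContinuous |>.isInducing
  simpa [mul_comm ‖(1 : 𝔸)‖] using (ContinuousLinearMap.mul 𝕂 𝔸 a).le_opNorm 1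

end LeftRegularRepresentation

theorem tendsto_exp_smul_mul_exp_smul_pow {𝕂 𝔸 : Type*} [RCLike 𝕂] [NormedRing 𝔸]
    [NormedAlgebra 𝕂 𝔸] [CompleteSpace 𝔸] (A B : 𝔸) :
    Tendsto (fun n : ℕ => (exp ((n : 𝕂)⁻¹ • A) * exp ((n : 𝕂)⁻¹ • B)) ^ n) atTop
      (𝓝 (exp (A + B))) := by
  nontriviality 𝔸
  let +nondep : NormedAlgebra ℚ 𝔸 := .restrictScalars ℚ 𝕂 𝔸
  let +nondep : NormedAlgebra ℚ (𝔸 →L[𝕂] 𝔸) := .restrictScalars ℚ 𝕂 _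
  have hL := AlgHom.isInducing_Lmul 𝕂 𝔸
  rw [hL.tendsto_nhds_iff]
  simpa [Function.comp_def, map_exp _ hL.continuous] using
    tendsto_exp_smul_mul_exp_smul_pow_of_normOneClass (𝕂 := 𝕂)
      (AlgHom.Lmul 𝕂 𝔸 A) (AlgHom.Lmul 𝕂 𝔸 B)

/-- Trotter product formula in a complex Banach algebra, Eq. (5) of the paper:
`(exp(A/n) exp(B/n))^n → exp(A + B)` in norm. -/
theorem trotter_product_formula
    {𝔸 : Type*} [NormedRing 𝔸] [NormedAlgebra ℂ 𝔸] [CompleteSpace 𝔸]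
    (A B : 𝔸) :
    Tendsto (fun n : ℕ =>
        (NormedSpace.exp ((n : ℂ)⁻¹ • A) * NormedSpace.exp ((n : ℂ)⁻¹ • B)) ^ n)
      atTop (nhds (NormedSpace.exp (A + B))) :=
  tendsto_exp_smul_mul_exp_smul_pow A B
end
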